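/- Let k ≥ 3 and 3 ≤ s ≤ C(k,2) be integers and let r be an integer with 2 ≤ r ≤ ⌈(s-1)^{(k-1)/(k-2)} - 1⌉. Then for all sufficiently large n, |C_{r,P_{k,s}}(K_n)| > |C_{r,P_{k,s}}(T_{k-1}(n))| = r^{ex(n,K_k)}. -/

import Mathlib

open SimpleGraph Finset

namespace ERExt

/-- The edges of `G` with both endpoints in `t`. -/
def cliqueEdges {V : Type*} (G : SimpleGraph V) (t : Finset V) : Set (Sym2 V) :=
  {e | e ∈ G.edgeSet ∧ ∀ v ∈ e, v ∈ t}

/-- An `r`-coloring of the edges of `G` is `P_{k,s}`-free if fewer than `s` distinct colors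
appear on the edges of every copy of `K_k` in `G`. -/
def PkFree {V : Type*} (G : SimpleGraph V) (r k s : ℕ) (c : G.edgeSet → Fin r) : Prop :=
  ∀ t : Finset V, G.IsNClique k t →
    Set.ncard {col : Fin r | ∃ e : G.edgeSet, (∀ v ∈ (e : Sym2 V), v ∈ t) ∧ c e = col} < s

/-- The number of `P_{k,s}`-free `r`-colorings of `G`, i.e. `|C_{r,P_{k,s}}(G)|`. -/
noncomputable def numPkFree {V : Type*} (G : SimpleGraph V) (r k s : ℕ) : ℕ :=
  Nat.card {c : G.edgeSet → Fin r // PkFree G r k s c}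

/-- `c_{r,P_{k,s}}(n)`, the maximum of `|C_{r,P_{k,s}}(G)|` over `n`-vertex graphs `G`. -/
noncomputable def maxPkFree (n r k s : ℕ) : ℕ :=
  sSup {N | ∃ G : SimpleGraph (Fin n), numPkFree G r k s = N}

/-- The Turán number `ex(n, K_k)`. -/
noncomputable def turanNum (n k : ℕ) : ℕ :=
  sSup {N | ∃ G : SimpleGraph (Fin n), G.CliqueFree k ∧ G.edgeSet.ncard = N}

/-- `A(k,j) = C(k,2) - ex(k, K_{j+1})`. -/
noncomputable def Afun (k j : ℕ) : ℕ := k.choose 2 - turanNum k (j + 1)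

/-- `s_0(k) = A(k,2) + 2`. -/
noncomputable def s0 (k : ℕ) : ℕ := Afun k 2 + 2

/-- `s_1(k) = C(k,2) - ⌊k/2⌋ + 2`. -/
def s1 (k : ℕ) : ℕ := k.choose 2 - k / 2 + 2

/-- `i*`, the least `i` with `A(k,k-i) ≥ s-2`. -/
noncomputable def iStar (k s : ℕ) : ℕ := sInf {i | s - 2 ≤ Afun k (k - i)}

/-- The quantity of which `r_0(k,s)` is the least integer strictly above, for `s ≤ s_0(k)`. -/
noncomputable def r0low (k s : ℕ) : ℝ :=
  ((s : ℝ) - 1) ^ (((k : ℝ) - 1) / ((k : ℝ) - 2)) *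
    ∏ i ∈ Finset.Icc 2 (iStar k s),
      ((s : ℝ) - (Afun k (k - i + 1) : ℝ) - 1) ^
        ((1 : ℝ) / (((k : ℝ) - (i : ℝ) - 1) * ((k : ℝ) - (i : ℝ))))

/-- `b(k,p,j) = min{ j·C(p,2), ⌊k/p⌋·C(p,2) + C(k - ⌊k/p⌋·p, 2) }`. -/
def bfun (k p j : ℕ) : ℕ :=
  min (j * p.choose 2) ((k / p) * p.choose 2 + (k - (k / p) * p).choose 2)

/-- `L(k,s,p,j) = 1 + 2p(k-1)/(j(p-1))`. -/
noncomputable def Lfun (k s p j : ℕ) : ℝ :=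
  1 + (2 * (p : ℝ) * ((k : ℝ) - 1)) / ((j : ℝ) * ((p : ℝ) - 1))

/-- `p*`, the largest `2 ≤ p ≤ k-1` with `b(k,p,k-1) ≤ C(k,2) - s + 2`. -/
noncomputable def pStar (k s : ℕ) : ℕ :=
  sSup {p | 2 ≤ p ∧ p ≤ k - 1 ∧ bfun k p (k - 1) ≤ k.choose 2 - s + 2}

/-- `j*`, the largest `1 ≤ j ≤ k-1` with `b(k,2,j) ≤ C(k,2) - s + 2`. -/
noncomputable def jStar (k s : ℕ) : ℕ :=
  sSup {j | 1 ≤ j ∧ j ≤ k - 1 ∧ bfun k 2 j ≤ k.choose 2 - s + 2}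

/-- The product `∏_{i=2}^{k-2} (s - A(k,k-i+1) - 1)^{1/((k-i-1)(k-i))}`. -/
noncomputable def prodMid (k s : ℕ) : ℝ :=
  ∏ i ∈ Finset.Icc 2 (k - 2),
    ((s : ℝ) - (Afun k (k - i + 1) : ℝ) - 1) ^
      ((1 : ℝ) / (((k : ℝ) - (i : ℝ) - 1) * ((k : ℝ) - (i : ℝ))))

/-- The quantity of which `r_0(k,s)` is the least integer strictly above, for
`s_0(k) < s ≤ s_1(k)`. -/
noncomputable def r0mid (k s : ℕ) : ℝ :=
  ((s : ℝ) - (Afun k 2 : ℝ) - 1) ^ (Lfun k s (pStar k s) (k - 1)) * prodMid k s *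
    ((s : ℝ) - 1) ^ (((k : ℝ) - 1) / ((k : ℝ) - 2))

/-- The quantity of which `r_0(k,s)` is the least integer strictly above, for `s > s_1(k)`. -/
noncomputable def r0high (k s : ℕ) : ℝ :=
  ((s : ℝ) - (Afun k 2 : ℝ) - 1) ^ (Lfun k s 2 (jStar k s)) * prodMid k s *
    ((s : ℝ) - 1) ^ (((k : ℝ) - 1) / ((k : ℝ) - 2))

/-- The threshold `r_0(k,s)`: the least integer greater than the relevant quantity. -/
noncomputable def r0 (k s : ℕ) : ℕ :=
  if s ≤ s0 k then Nat.floor (r0low k s) + 1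
  else if s ≤ s1 k then Nat.floor (r0mid k s) + 1
  else Nat.floor (r0high k s) + 1

/-- `r_1(k,s) = ⌈(s-1)^{(k-1)/(k-2)} - 1⌉`. -/
noncomputable def r1fun (k s : ℕ) : ℕ :=
  (⌈((s : ℝ) - 1) ^ (((k : ℝ) - 1) / ((k : ℝ) - 2)) - 1⌉).toNat

/-- `L_opt(k,s)`, the minimum of `L(k,s,p,j)` over admissible pairs `(p,j)`. -/
noncomputable def Lopt (k s : ℕ) : ℝ :=
  sInf {x | ∃ p j : ℕ, 2 ≤ p ∧ p ≤ k - 1 ∧ 1 ≤ j ∧ j ≤ k - 1 ∧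
    bfun k p j ≤ k.choose 2 - s + 2 ∧ x = Lfun k s p j}

/-- A graph is complete multipartite if vertices are adjacent exactly when they lie in
different classes of some partition. -/
def IsCompleteMultipartite' {n : ℕ} (G : SimpleGraph (Fin n)) : Prop :=
  ∃ f : Fin n → Fin n, ∀ v w, G.Adj v w ↔ f v ≠ f w

/-- A list-colored graph is `(K_k, ≥ s)`-free if no copy of `K_k` admits a choice of colors
from the lists of its edges in which at least `s` distinct colors appear. -/
def GeSFree {V : Type*} (r k s : ℕ) (H : SimpleGraph V) (L : Sym2 V → Finset (Fin r)) : Prop :=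
  ¬ ∃ (t : Finset V) (c : Sym2 V → Fin r), H.IsNClique k t ∧
      (∀ e ∈ cliqueEdges H t, c e ∈ L e) ∧
      s ≤ Set.ncard {col : Fin r | ∃ e ∈ cliqueEdges H t, c e = col}

/-- `e_j(H)`, the number of edges of `H` whose list has size `j`. -/
noncomputable def ej {V : Type*} {r : ℕ} (H : SimpleGraph V) (L : Sym2 V → Finset (Fin r))
    (j : ℕ) : ℕ :=
  Set.ncard {e | e ∈ H.edgeSet ∧ (L e).card = j}

end ERExt


namespace ERExt

private lemma auxP1 (c : ℕ) : ∀ n, 1 ≤ n → c^n + n * c^(n-1) ≤ (c+1)^n := by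
  intro n
  induction n with
  | zero => omega
  | succ m ih =>
    intro _
    rcases Nat.eq_zero_or_pos m with hm | hm
    · subst hm; simp
    · have h1 := ih hm
      have h2 : (c^m + m * c^(m-1)) * (c+1) ≤ (c+1)^m * (c+1) :=
        Nat.mul_le_mul_right _ h1
      have e1 : c^(m-1)*c = c^m := by
        rw [← pow_succ]; congr 1; omega
      have expand : (c^m + m*c^(m-1))*(c+1) = c^(m+1) + c^m + m*(c^(m-1)*c) + m*c^(m-1) := by
        ring
      have esplit : (m+1) * c^m = m * c^m + c^m := by ring
      calc c^(m+1) + (m+1) * c^(m+1-1)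
          ≤ (c^m + m * c^(m-1)) * (c+1) := by
            simp only [Nat.add_sub_cancel]
            rw [expand, e1, esplit]
            linarith [Nat.zero_le (m * c^(m-1))]
        _ ≤ (c+1)^(m+1) := by rw [pow_succ]; exact h2

private lemma auxP2 (c : ℕ) (hc : 2 ≤ c) : ∀ X, 2 ^ (X / c) * c ^ X ≤ (c+1)^X := by
  have hcc : 2 * c^c ≤ (c+1)^c := by
    have h := auxP1 c c (by omega)
    have hcc' : c * c^(c-1) = c^c := by
      rw [← pow_succ']; congr 1; omega
    omega
  intro X
  induction X using Nat.strong_induction_on with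
  | _ X ih =>
    rcases lt_or_ge X c with h | h
    · rw [Nat.div_eq_of_lt h]
      simpa using Nat.pow_le_pow_left (by omega) X
    · obtain ⟨Z, rfl⟩ : ∃ Z, X = Z + c := ⟨X - c, by omega⟩
      have h2 := ih Z (by omega)
      have e : (2:ℕ) ^ ((Z+c)/c) * c ^ (Z+c) = (2^(Z/c) * c^Z) * (2 * c^c) := by
        rw [Nat.add_div_right _ (by omega : 0 < c), pow_succ, pow_add]; ring
      rw [e, show ((c:ℕ)+1)^(Z+c) = (c+1)^Z * (c+1)^c from pow_add _ _ _]
      exact Nat.mul_le_mul h2 hcc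

private lemma auxP3 (c X Y D : ℕ) (hc : 2 ≤ c) (hY : Y ≤ X + D) (hX : c^2 * D + c ≤ X) :
    c ^ Y < (c+1) ^ X := by
  have hdiv : c * D + 1 ≤ X / c := by
    rw [Nat.le_div_iff_mul_le (by omega)]
    nlinarith
  have h1 : c ^ D < 2 ^ (X / c) := by
    calc c ^ D ≤ (2^c) ^ D := Nat.pow_le_pow_left (Nat.le_of_lt (Nat.lt_two_pow_self)) D
      _ = 2 ^ (c * D) := by rw [← pow_mul]
      _ < 2 ^ (X / c) := Nat.pow_lt_pow_right (by omega) (by omega)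
  calc c ^ Y ≤ c ^ (X + D) := Nat.pow_le_pow_right (by omega) hY
    _ = c ^ D * c ^ X := by rw [pow_add]; ring
    _ < 2 ^ (X / c) * c ^ X :=
        Nat.mul_lt_mul_of_lt_of_le h1 (le_refl _) (Nat.pow_pos (by omega))
    _ ≤ (c+1)^X := auxP2 c hc X

private lemma auxP4 (m r k A B D : ℕ) (hk : 3 ≤ k) (hr : 2 ≤ r)
    (hkey : r^(k-2) < m^(k-1))
    (hBA : B * (k-1) ≤ A * (k-2) + D)
    (hbig : (r^(k-2))^2 * D + r^(k-2) ≤ A * (k-2)) :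
    r ^ B < m ^ A := by
  set c := r^(k-2) with hc
  have hc2 : 2 ≤ c := by
    calc (2:ℕ) = 2^1 := (pow_one 2).symm
      _ ≤ 2^(k-2) := Nat.pow_le_pow_right (by omega) (by omega)
      _ ≤ r^(k-2) := Nat.pow_le_pow_left hr _
  have main : c ^ (B*(k-1)) < (c+1) ^ (A*(k-2)) := auxP3 c _ _ D hc2 hBA hbig
  have step : (c+1) ^ (A*(k-2)) ≤ (m^(k-1))^(A*(k-2)) :=
    Nat.pow_le_pow_left hkey _
  have key2 : (r^B) ^ ((k-2)*(k-1)) < (m^A) ^ ((k-2)*(k-1)) := by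
    have e1 : (r^B) ^ ((k-2)*(k-1)) = c ^ (B*(k-1)) := by
      rw [hc, ← pow_mul, ← pow_mul]; congr 1; ring
    have e2 : (m^A) ^ ((k-2)*(k-1)) = (m^(k-1))^(A*(k-2)) := by
      rw [← pow_mul, ← pow_mul]; congr 1; ring
    rw [e1, e2]; exact lt_of_lt_of_le main step
  by_contra hcon
  push_neg at hcon
  exact absurd (Nat.pow_le_pow_left hcon ((k-2)*(k-1))) (not_le.mpr key2)

private lemma r1key (k s r : ℕ) (hk : 3 ≤ k) (hs : 3 ≤ s) (hr2 : 2 ≤ r) (hr1 : r ≤ r1fun k s) :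
    r^(k-2) < (s-1)^(k-1) := by
  have hk3 : (3:ℝ) ≤ (k:ℝ) := by exact_mod_cast hk
  have hs3 : (3:ℝ) ≤ (s:ℝ) := by exact_mod_cast hs
  set e : ℝ := ((k : ℝ) - 1) / ((k : ℝ) - 2) with he
  set x : ℝ := ((s : ℝ) - 1) ^ e with hx
  have hb1 : (1:ℝ) ≤ (s:ℝ) - 1 := by linarith
  have he0 : 0 ≤ e := by
    apply div_nonneg <;> linarith
  have hx1 : (1:ℝ) ≤ x := Real.one_le_rpow hb1 he0
  have hceil : 0 ≤ ⌈x - 1⌉ := Int.ceil_nonneg (by linarith)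
  have h1 : (r : ℤ) ≤ ⌈x - 1⌉ := (Int.le_toNat hceil).mp hr1
  have h2 : (r : ℝ) < x := by
    have h1' : ((r:ℤ) : ℝ) ≤ (⌈x - 1⌉ : ℝ) := by exact_mod_cast h1
    have h3 := Int.ceil_lt_add_one (x - 1)
    push_cast at h1'
    linarith
  have h4 : (r : ℝ) ^ (k-2) < x ^ (k-2) :=
    pow_lt_pow_left₀ h2 (by positivity) (by omega)
  have h5 : x ^ (k-2) = ((s:ℝ) - 1) ^ (k-1) := by
    rw [hx, ← Real.rpow_natCast (((s : ℝ) - 1) ^ e) (k-2), ← Real.rpow_mul (by linarith)]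
    have hmul : e * ((k-2 : ℕ) : ℝ) = ((k-1 : ℕ) : ℝ) := by
      have c1 : ((k-2 : ℕ) : ℝ) = (k:ℝ) - 2 := by
        push_cast [Nat.cast_sub (by omega : 2 ≤ k)]; ring
      have c2 : ((k-1 : ℕ) : ℝ) = (k:ℝ) - 1 := by
        push_cast [Nat.cast_sub (by omega : 1 ≤ k)]; ring
      rw [c1, c2, he, div_mul_cancel₀]
      linarith
    rw [hmul, Real.rpow_natCast]
  rw [h5] at h4
  have hfin : ((r ^ (k-2) : ℕ) : ℝ) < (((s-1) ^ (k-1) : ℕ) : ℝ) := by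
    push_cast [Nat.cast_sub (by omega : 1 ≤ s)]
    exact h4
  exact_mod_cast hfin

private lemma numPkFree_of_cliqueFree {n : ℕ} (G : SimpleGraph (Fin n)) (r k s : ℕ)
    (h : G.CliqueFree k) : numPkFree G r k s = r ^ G.edgeSet.ncard := by
  have hall : ∀ c : G.edgeSet → Fin r, PkFree G r k s c := by
    intro c t ht
    exact absurd ht.isClique (by have := h t; intro hcl; exact this ⟨hcl, ht.card_eq⟩)
  rw [numPkFree, Nat.card_congr (Equiv.subtypeUnivEquiv hall), Nat.card_fun,
    Nat.card_eq_fintype_card (α := Fin r), Fintype.card_fin, Nat.card_coe_set_eq]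

private lemma turanNum_eq {n k : ℕ} (hk : 3 ≤ k) :
    turanNum n k = (turanGraph n (k-1)).edgeFinset.card := by
  have hcf : (turanGraph n (k-1)).CliqueFree k := by
    have := turanGraph_cliqueFree (n := n) (r := k-1) (by omega)
    rwa [show k - 1 + 1 = k by omega] at this
  have htm := isTuranMaximal_turanGraph (n := n) (r := k-1) (by omega)
  have hmem : (turanGraph n (k-1)).edgeFinset.card ∈
      {N | ∃ G : SimpleGraph (Fin n), G.CliqueFree k ∧ G.edgeSet.ncard = N} :=
    ⟨turanGraph n (k-1), hcf, by rw [← coe_edgeFinset, Set.ncard_coe_finset]⟩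
  apply le_antisymm
  · apply csSup_le ⟨_, hmem⟩
    rintro N ⟨G, hG, rfl⟩
    classical
    have := htm.2 (G' := G) (by rwa [show k - 1 + 1 = k by omega])
    rwa [← coe_edgeFinset, Set.ncard_coe_finset]
  · apply le_csSup
    · refine ⟨(Fintype.card (Sym2 (Fin n))), ?_⟩
      rintro N ⟨G, hG, rfl⟩
      calc G.edgeSet.ncard ≤ (Set.univ : Set (Sym2 (Fin n))).ncard :=
            Set.ncard_le_ncard (Set.subset_univ _) (Set.toFinite _)
        _ = Fintype.card (Sym2 (Fin n)) := by rw [Set.ncard_univ, Nat.card_eq_fintype_card]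
    · exact hmem

private lemma numPkFree_top_ge {n : ℕ} (r k s m : ℕ) (hm : m ≤ r) (hms : m < s) :
    m ^ (⊤ : SimpleGraph (Fin n)).edgeSet.ncard ≤ numPkFree (⊤ : SimpleGraph (Fin n)) r k s := by
  set G := (⊤ : SimpleGraph (Fin n))
  have hf : ∀ c : G.edgeSet → Fin m, PkFree G r k s (fun e => Fin.castLE hm (c e)) := by
    intro c t ht
    have hsub : {col : Fin r | ∃ e : G.edgeSet, (∀ v ∈ (e : Sym2 (Fin n)), v ∈ t) ∧
        Fin.castLE hm (c e) = col} ⊆ Set.range (Fin.castLE hm) := by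
      rintro col ⟨e, -, rfl⟩; exact ⟨c e, rfl⟩
    calc Set.ncard _ ≤ (Set.range (Fin.castLE hm)).ncard :=
          Set.ncard_le_ncard hsub (Set.toFinite _)
      _ ≤ m := by
          rw [← Set.image_univ]
          refine (Set.ncard_image_le (Set.toFinite _)).trans ?_
          simp [Set.ncard_univ]
      _ < s := hms
  have hinj : Function.Injective
      (fun c : G.edgeSet → Fin m => (⟨fun e => Fin.castLE hm (c e), hf c⟩ :
        {c : G.edgeSet → Fin r // PkFree G r k s c})) := by
    intro c₁ c₂ hcc
    funext e
    have := congrArg (fun x => x.1 e) hcc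
    exact Fin.castLE_injective hm this
  calc m ^ G.edgeSet.ncard = Nat.card (G.edgeSet → Fin m) := by
        rw [Nat.card_fun, Nat.card_eq_fintype_card (α := Fin m), Fintype.card_fin,
          Nat.card_coe_set_eq]
    _ ≤ numPkFree G r k s := Nat.card_le_card_of_injective _ hinj

private lemma same_residue_count (n m : ℕ) (hm : 1 ≤ m) (v : Fin n) :
    n / m ≤ #(univ.filter fun w : Fin n => (v:ℕ) % m = (w:ℕ) % m) := by
  have hinj : ∀ j : Fin (n / m), (v:ℕ) % m + (j:ℕ) * m < n := by
    intro j
    have hj : (j:ℕ) ≤ n / m - 1 := by have := j.2; omega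
    have h1 : ((j:ℕ)+1) * m ≤ (n / m) * m := Nat.mul_le_mul_right m (by have := j.2; omega)
    have h2 : (n / m) * m ≤ n := Nat.div_mul_le_self n m
    have h3 : (v:ℕ) % m < m := Nat.mod_lt _ (by omega)
    nlinarith
  classical
  have hcard := Finset.card_le_card_of_injOn
    (f := fun j : Fin (n / m) => (⟨(v:ℕ) % m + (j:ℕ) * m, hinj j⟩ : Fin n))
    (s := univ) (t := univ.filter fun w : Fin n => (v:ℕ) % m = (w:ℕ) % m)
    (by
      intro j _
      simp only [coe_filter, mem_univ, true_and, Set.mem_setOf_eq]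
      rw [Nat.add_mul_mod_self_right,
        Nat.mod_eq_of_lt (Nat.mod_lt _ (by omega : 0 < m))])
    (by
      intro a _ b _ hab
      have h1 : (v:ℕ) % m + (a:ℕ) * m = (v:ℕ) % m + (b:ℕ) * m := by
        simpa [Fin.ext_iff] using hab
      have h2 : (a:ℕ) = (b:ℕ) :=
        Nat.eq_of_mul_eq_mul_right (by omega : 0 < m) (by omega : (a:ℕ)*m = (b:ℕ)*m)
      exact Fin.ext h2)
  simpa using hcard

private lemma turan_degree_le (n m : ℕ) (hm : 1 ≤ m) (v : Fin n) :
    (turanGraph n m).degree v ≤ n - n / m := by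
  classical
  have hdeg : (turanGraph n m).degree v
      = #(univ.filter fun w : Fin n => ¬ ((v:ℕ) % m = (w:ℕ) % m)) := by
    rw [degree]
    congr 1
    ext w
    simp [neighborFinset, turanGraph, Ne]
    exact Set.mem_toFinset.trans Iff.rfl
  rw [hdeg, Finset.filter_not, Finset.card_sdiff_of_subset (Finset.filter_subset _ _)]
  have := same_residue_count n m hm v
  simp only [Finset.card_univ, Fintype.card_fin]
  omega

private lemma turan_edges_le (n m : ℕ) (hm : 1 ≤ m) :
    2 * #(turanGraph n m).edgeFinset ≤ n * (n - n / m) := by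
  classical
  rw [← sum_degrees_eq_twice_card_edges]
  calc ∑ v, (turanGraph n m).degree v ≤ ∑ _v : Fin n, (n - n / m) :=
        Finset.sum_le_sum fun v _ => turan_degree_le n m hm v
    _ = n * (n - n / m) := by simp [mul_comm]

private lemma two_mul_choose_two (n : ℕ) : 2 * n.choose 2 = n * (n-1) := by
  rcases Nat.eq_zero_or_pos n with h0 | h0
  · subst h0; simp
  · obtain ⟨t, rfl⟩ : ∃ t, n = t+1 := ⟨n-1, by omega⟩
    rw [Nat.choose_two_right]
    simp only [Nat.add_sub_cancel]
    have hdvd : 2 ∣ (t+1) * t := by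
      rw [mul_comm]; exact (Nat.even_mul_succ_self t).two_dvd
    rw [Nat.mul_div_cancel' hdvd]

private lemma Bbound (k n A B : ℕ) (hk : 3 ≤ k)
    (h2B : 2*B ≤ n*(n - n/(k-1))) (h2A : 2*A = n*(n-1)) :
    B*(k-1) ≤ A*(k-2) + (k-2)*n := by
  obtain ⟨K, rfl⟩ : ∃ K, k = K+3 := ⟨k-3, by omega⟩
  simp only [show K+3-1 = K+2 by omega, show K+3-2 = K+1 by omega] at *
  rcases Nat.eq_zero_or_pos n with h0 | h0
  · subst h0; simp_all
  obtain ⟨t, rfl⟩ : ∃ t, n = t+1 := ⟨n-1, by omega⟩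
  set q := (t+1) / (K+2) with hqdef
  set rem := (t+1) % (K+2) with hremdef
  have hdm : (K+2)*q + rem = t+1 := Nat.div_add_mod (t+1) (K+2)
  have hrem : rem < K+2 := Nat.mod_lt _ (by omega)
  have hqle : q ≤ t+1 := Nat.div_le_self _ _
  have hq : t+1 - q = (K+1)*q + rem := by
    have e : (K+2)*q = (K+1)*q + q := by ring
    omega
  rw [hq] at h2B
  have h2A' : 2*A = (t+1)*t := by simpa using h2A
  have key : ((K+1)*q + rem) * (K+2) ≤ (K+1)*((t+1)+1) := by nlinarith [hdm, hrem]
  have c1 : 2*(B*(K+2)) ≤ ((t+1)*((K+1)*q + rem))*(K+2) := by nlinarith [h2B]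
  have c2 : ((t+1)*((K+1)*q + rem))*(K+2) = (t+1)*(((K+1)*q + rem)*(K+2)) := by ring
  have c3 : (t+1)*(((K+1)*q + rem)*(K+2)) ≤ (t+1)*((K+1)*((t+1)+1)) :=
    Nat.mul_le_mul_left _ key
  have c4 : (t+1)*((K+1)*((t+1)+1)) = 2*(A*(K+1)) + 2*((K+1)*(t+1)) := by
    have e1 : 2*(A*(K+1)) = (t+1)*t*(K+1) := by
      calc 2*(A*(K+1)) = (2*A)*(K+1) := by ring
        _ = (t+1)*t*(K+1) := by rw [h2A']
    have e2 : (t+1)*((K+1)*((t+1)+1)) = (t+1)*t*(K+1) + 2*((K+1)*(t+1)) := by ring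
    omega
  omega

end ERExt

namespace ERExt

/-- For `2 ≤ r ≤ r_1(k,s)`, the complete graph beats the Turán graph for large `n`. -/
theorem thm_complete_beats_turan (k s r : ℕ) (hk : 3 ≤ k) (hs : 3 ≤ s) (hsk : s ≤ k.choose 2)
    (hr2 : 2 ≤ r) (hr1 : r ≤ r1fun k s) :
    ∃ n0 : ℕ, ∀ n : ℕ, n0 ≤ n →
      numPkFree (turanGraph n (k - 1)) r k s = r ^ turanNum n k ∧
      r ^ turanNum n k < numPkFree (⊤ : SimpleGraph (Fin n)) r k s := by
  classical
  set c := r^(k-2) with hcdef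
  refine ⟨2*c^2 + 2*c + 2, fun n hn => ?_⟩
  have hcf : (turanGraph n (k-1)).CliqueFree k := by
    have := turanGraph_cliqueFree (n := n) (r := k-1) (by omega)
    rwa [show k - 1 + 1 = k by omega] at this
  have hTeq : turanNum n k = (turanGraph n (k-1)).edgeFinset.card := turanNum_eq hk
  constructor
  · rw [numPkFree_of_cliqueFree _ r k s hcf]
    congr 1
    rw [hTeq, ← coe_edgeFinset, Set.ncard_coe_finset]
  · set m := min r (s-1) with hmdef
    have hkey : r^(k-2) < m^(k-1) := by
      rcases le_total r (s-1) with h | h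
      · rw [hmdef, min_eq_left h]
        exact Nat.pow_lt_pow_right (by omega) (by omega)
      · rw [hmdef, min_eq_right h]
        exact r1key k s r hk hs hr2 hr1
    have hA : (⊤ : SimpleGraph (Fin n)).edgeSet.ncard = n.choose 2 := by
      rw [← coe_edgeFinset, Set.ncard_coe_finset, card_edgeFinset_top_eq_card_choose_two]
      simp
    have hge : m ^ (n.choose 2) ≤ numPkFree (⊤ : SimpleGraph (Fin n)) r k s := by
      rw [← hA]
      exact numPkFree_top_ge r k s m (min_le_left _ _) (by omega)
    refine lt_of_lt_of_le ?_ hge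
    apply auxP4 m r k (n.choose 2) (turanNum n k) ((k-2)*n) hk hr2 hkey
    · apply Bbound k n _ _ hk
      · rw [hTeq]
        exact turan_edges_le n (k-1) (by omega)
      · exact two_mul_choose_two n
    · have h1 : 2*(c^2*n + c) ≤ n*(n-1) := by
        obtain ⟨t, rfl⟩ : ∃ t, n = t + (2*c^2+2*c+2) := ⟨n - (2*c^2+2*c+2), by omega⟩
        have hsub : t + (2*c^2+2*c+2) - 1 = t + (2*c^2+2*c+1) := by omega
        rw [hsub]
        nlinarith [Nat.zero_le t, Nat.zero_le c]
      have h2 : c^2*n + c ≤ n.choose 2 := by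
        have := two_mul_choose_two n
        omega
      calc c^2 * ((k-2)*n) + c ≤ (c^2*n + c) * (k-2) := by
            have hk2 : 1 ≤ k - 2 := by omega
            nlinarith
        _ ≤ n.choose 2 * (k-2) := Nat.mul_le_mul_right _ h2

end ERExt
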